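/- Let U ⊆ ℝⁿ be open and convex, and let φ₀, φ₁ : U → ℝ be twice continuously differentiable with positive definite Hessian matrices at every point. Let W ⊆ ℝⁿ × (0,1) be open, let ξ, η : W → U be continuously differentiable maps satisfying (1−t)·ξ(x,t) + t·η(x,t) = x and ∇φ₀(ξ(x,t)) = ∇φ₁(η(x,t)) for all (x,t) ∈ W, and let u : W → ℝ be twice continuously differentiable with ∇ₓu(x,t) = ∇φ₀(ξ(x,t)) on W. Write H(x,t) = ((1−t)·(D²φ₀(ξ(x,t)))⁻¹ + t·(D²φ₁(η(x,t)))⁻¹)⁻¹. If the full (n+1)×(n+1) Hessian of u in the joint variables (x,t) has determinant zero on W, then ∂²ₜₜu(x,t) = ⟨ξ(x,t) − η(x,t), H(x,t)·(ξ(x,t) − η(x,t))⟩ for all (x,t) ∈ W. -/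

import Mathlib

/-!
Differentiating `∇ₓu = ∇φ₀(ξ)` shows that the columns of `D²_{(x,t)}u` indexed by space are
`D²φ₀(ξ) · Dξ`. Differentiating the relations `(1-t)ξ + tη = x` and `∇φ₀(ξ) = ∇φ₁(η)` gives
`(1-t) Dξ w + t Dη w = w_x + w_t (ξ - η)` and `D²φ₀(ξ) Dξ w = D²φ₁(η) Dη w`, so that
`D²φ₀(ξ) Dξ w = H (w_x + w_t (ξ - η))`. Together with the symmetry of `D²_{(x,t)}u` this gives
the block form `[[H, H(ξ-η)], [(H(ξ-η))ᵀ, ∂²ₜₜu]]`. Its determinant is, by the Schur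
complement, `det H · (∂²ₜₜu - ⟨ξ-η, H(ξ-η)⟩)`, and `det H ≠ 0` because `H⁻¹` is a convex
combination of positive definite matrices.
-/

/-- The gradient of `φ : ℝⁿ → ℝ` at `x`, as the vector of partial derivatives. -/
noncomputable def grad {n : ℕ} (φ : (Fin n → ℝ) → ℝ) (x : Fin n → ℝ) : Fin n → ℝ :=
  fun i => fderiv ℝ φ x (Pi.single i 1)

/-- The Jacobian matrix of a map `g : ℝⁿ → ℝⁿ` at `x`. -/
noncomputable def jacobianMatrix {n : ℕ} (g : (Fin n → ℝ) → Fin n → ℝ)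
    (x : Fin n → ℝ) : Matrix (Fin n) (Fin n) ℝ :=
  Matrix.of fun i j => fderiv ℝ g x (Pi.single j 1) i

/-- The Hessian matrix of `φ : ℝⁿ → ℝ` at `x`. -/
noncomputable def hess {n : ℕ} (φ : (Fin n → ℝ) → ℝ) (x : Fin n → ℝ) :
    Matrix (Fin n) (Fin n) ℝ :=
  jacobianMatrix (grad φ) x

/-- The coordinate directions of `ℝⁿ × ℝ`, indexed by `Fin n ⊕ Unit`. -/
def dirvec (n : ℕ) : Fin n ⊕ Unit → (Fin n → ℝ) × ℝ
  | Sum.inl i => (Pi.single i 1, 0)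
  | Sum.inr _ => (0, 1)

/-- The full `(n+1)×(n+1)` Hessian of `u : ℝⁿ × ℝ → ℝ` in the joint variables `(x,t)`. -/
noncomputable def fullHess {n : ℕ} (u : (Fin n → ℝ) × ℝ → ℝ)
    (p : (Fin n → ℝ) × ℝ) : Matrix (Fin n ⊕ Unit) (Fin n ⊕ Unit) ℝ :=
  Matrix.of fun a b => fderiv ℝ (fun q => fderiv ℝ u q (dirvec n b)) p (dirvec n a)

open Filter Topology Matrix

section LinearAlgebra

variable {K ι : Type*} [Fintype ι] [DecidableEq ι]

lemma Matrix.mulVec_eq_inv_smul_add_smul_inv_mulVec [CommRing K] {A B : Matrix ι ι K}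
    {α β : K} {s r y : ι → K} (hA : IsUnit A.det) (hB : IsUnit B.det)
    (hC : IsUnit (α • A⁻¹ + β • B⁻¹).det) (hAB : A *ᵥ s = B *ᵥ r) (hy : α • s + β • r = y) :
    A *ᵥ s = (α • A⁻¹ + β • B⁻¹)⁻¹ *ᵥ y := by
  have hs : A⁻¹ *ᵥ (A *ᵥ s) = s := by rw [mulVec_mulVec, nonsing_inv_mul _ hA, one_mulVec]
  have hr : B⁻¹ *ᵥ (A *ᵥ s) = r := by rw [hAB, mulVec_mulVec, nonsing_inv_mul _ hB, one_mulVec]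
  conv_rhs => rw [← hy, ← hs, ← hr, ← smul_mulVec, ← smul_mulVec, ← add_mulVec, mulVec_mulVec,
    nonsing_inv_mul _ hC, one_mulVec]

lemma Matrix.det_fromBlocks_replicateCol_mulVec [CommRing K] (H : Matrix ι ι K) [Invertible H]
    (z v : ι → K) (c : K) :
    (fromBlocks H (replicateCol Unit (H *ᵥ z)) (replicateRow Unit v) (of fun _ _ => c)).det =
      H.det * (c - v ⬝ᵥ z) := by
  rw [det_fromBlocks₁₁, det_unique (n := Unit), invOf_eq_nonsing_inv, Matrix.mul_assoc,
    ← replicateCol_mulVec, mulVec_mulVec, inv_mul_of_invertible, one_mulVec]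
  rfl

lemma Matrix.IsSymm.apply_inr_inr_eq_of_det_eq_zero [Field K]
    {M : Matrix (ι ⊕ Unit) (ι ⊕ Unit) K} (hM : M.IsSymm) {H : Matrix ι ι K} (hH : IsUnit H.det)
    {z : ι → K} (h₁₁ : ∀ i j, M (.inl i) (.inl j) = H i j)
    (h₂₁ : ∀ j, M (.inr ()) (.inl j) = (H *ᵥ z) j) (hdet : M.det = 0) :
    M (.inr ()) (.inr ()) = z ⬝ᵥ H *ᵥ z := by
  have := H.invertibleOfIsUnitDet hH
  have hblocks : M = Matrix.fromBlocks H (replicateCol Unit (H *ᵥ z))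
      (replicateRow Unit (H *ᵥ z)) (of fun _ _ => M (.inr ()) (.inr ())) := by
    ext (i | i) (j | j)
    · simp [h₁₁]
    · simp [← h₂₁, hM.apply (.inl i)]
    · simp [h₂₁]
    · simp
  rw [hblocks, det_fromBlocks_replicateCol_mulVec, mul_eq_zero, sub_eq_zero,
    dotProduct_comm] at hdet
  exact hdet.resolve_left hH.ne_zero

end LinearAlgebra

section Calculus

variable {n : ℕ}

lemma fderiv_apply_eq_jacobianMatrix_mulVec (g : (Fin n → ℝ) → Fin n → ℝ) (x v : Fin n → ℝ) :
    fderiv ℝ g x v = jacobianMatrix g x *ᵥ v := by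
  have : jacobianMatrix g x =
      LinearMap.toMatrix' (fderiv ℝ g x : (Fin n → ℝ) →ₗ[ℝ] Fin n → ℝ) := by
    ext i j
    simp [jacobianMatrix, LinearMap.toMatrix'_apply]
  rw [this, LinearMap.toMatrix'_mulVec]
  rfl

lemma ContDiffAt.differentiableAt_grad {φ : (Fin n → ℝ) → ℝ} {x : Fin n → ℝ}
    (hφ : ContDiffAt ℝ 2 φ x) : DifferentiableAt ℝ (grad φ) x := by
  have hD : DifferentiableAt ℝ (fderiv ℝ φ) x :=
    (hφ.fderiv_right (m := 1) le_rfl).differentiableAt one_ne_zero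
  exact differentiableAt_pi.2 fun i => hD.clm_apply (differentiableAt_const _)

lemma fderiv_grad_comp {E : Type*} [NormedAddCommGroup E] [NormedSpace ℝ E]
    {φ : (Fin n → ℝ) → ℝ} {g : E → Fin n → ℝ} {p : E}
    (hφ : ContDiffAt ℝ 2 φ (g p)) (hg : DifferentiableAt ℝ g p) (w : E) :
    fderiv ℝ (fun q => grad φ (g q)) p w = hess φ (g p) *ᵥ fderiv ℝ g p w := by
  rw [fderiv_fun_comp p hφ.differentiableAt_grad hg]
  exact fderiv_apply_eq_jacobianMatrix_mulVec _ _ _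

lemma grad_slice_apply {u : (Fin n → ℝ) × ℝ → ℝ} {q : (Fin n → ℝ) × ℝ}
    (hu : DifferentiableAt ℝ u q) (j : Fin n) :
    grad (fun y => u (y, q.2)) q.1 j = fderiv ℝ u q (dirvec n (.inl j)) := by
  have hslice : HasFDerivAt (fun y => u (y, q.2))
      ((fderiv ℝ u q).comp ((ContinuousLinearMap.id ℝ _).prod 0)) q.1 :=
    hu.hasFDerivAt.comp q.1 ((hasFDerivAt_id _).prodMk (hasFDerivAt_const _ _))
  simp [grad, hslice.fderiv, dirvec]

lemma fullHess_apply_eq_fderiv_fderiv {u : (Fin n → ℝ) × ℝ → ℝ} {p : (Fin n → ℝ) × ℝ}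
    (hu : DifferentiableAt ℝ (fderiv ℝ u) p) (a b : Fin n ⊕ Unit) :
    fullHess u p a b = fderiv ℝ (fderiv ℝ u) p (dirvec n a) (dirvec n b) := by
  simp [fullHess, fderiv_clm_apply hu (differentiableAt_const _)]

lemma ContDiffAt.isSymm_fullHess {u : (Fin n → ℝ) × ℝ → ℝ} {p : (Fin n → ℝ) × ℝ}
    (hu : ContDiffAt ℝ 2 u p) : (fullHess u p).IsSymm := by
  have hD : DifferentiableAt ℝ (fderiv ℝ u) p :=
    (hu.fderiv_right (m := 1) le_rfl).differentiableAt one_ne_zero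
  ext a b
  simp only [transpose_apply, fullHess_apply_eq_fderiv_fderiv hD]
  exact hu.isSymmSndFDerivAt (by simp) _ _

lemma fullHess_apply_inl {u : (Fin n → ℝ) × ℝ → ℝ} {G : (Fin n → ℝ) × ℝ → Fin n → ℝ}
    {p : (Fin n → ℝ) × ℝ} (hu : ContDiffAt ℝ 2 u p)
    (hG : ∀ᶠ q in 𝓝 p, grad (fun y => u (y, q.2)) q.1 = G q) (hGd : DifferentiableAt ℝ G p)
    (a : Fin n ⊕ Unit) (j : Fin n) :
    fullHess u p a (.inl j) = fderiv ℝ G p (dirvec n a) j := by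
  have hcol : (fun q => fderiv ℝ u q (dirvec n (.inl j))) =ᶠ[𝓝 p] fun q => G q j := by
    filter_upwards [hG, hu.eventually (by simp)] with q hq huq
    rw [← hq, grad_slice_apply (huq.differentiableAt (by simp))]
  rw [fullHess, of_apply, hcol.fderiv_eq, fderiv_apply hGd]
  rfl

lemma one_sub_smul_fderiv_add_smul_fderiv_eq {F : Type*} [NormedAddCommGroup F]
    [NormedSpace ℝ F] {ξ η : F × ℝ → F} {p : F × ℝ} (hξ : DifferentiableAt ℝ ξ p)
    (hη : DifferentiableAt ℝ η p) (h : ∀ᶠ q in 𝓝 p, (1 - q.2) • ξ q + q.2 • η q = q.1)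
    (w : F × ℝ) :
    (1 - p.2) • fderiv ℝ ξ p w + p.2 • fderiv ℝ η p w = w.1 + w.2 • (ξ p - η p) := by
  have hcomb := (((hasFDerivAt_const (1 : ℝ) p).sub hasFDerivAt_snd).smul hξ.hasFDerivAt).add
    (hasFDerivAt_snd.smul hη.hasFDerivAt)
  have hD := congrArg (· w)
    ((hcomb.congr_of_eventuallyEq (h.mono fun _ => Eq.symm)).unique hasFDerivAt_fst)
  simp only [Pi.sub_apply, zero_sub, _root_.add_apply,
    _root_.smul_apply, ContinuousLinearMap.smulRight_apply,
    _root_.neg_apply, ContinuousLinearMap.coe_snd', neg_smul,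
    ContinuousLinearMap.coe_fst'] at hD
  linear_combination (norm := module) hD

end Calculus

theorem stmt8_general (n : ℕ) (U : Set (Fin n → ℝ)) (hUo : IsOpen U)
    (φ₀ φ₁ : (Fin n → ℝ) → ℝ)
    (hφ₀ : ContDiffOn ℝ 2 φ₀ U) (hφ₁ : ContDiffOn ℝ 2 φ₁ U)
    (hH₀ : ∀ x ∈ U, (hess φ₀ x).PosDef) (hH₁ : ∀ x ∈ U, (hess φ₁ x).PosDef)
    (W : Set ((Fin n → ℝ) × ℝ)) (hWo : IsOpen W)
    (hWt : ∀ p ∈ W, p.2 ∈ Set.Ioo (0 : ℝ) 1)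
    (ξ η : (Fin n → ℝ) × ℝ → Fin n → ℝ)
    (hξU : ∀ p ∈ W, ξ p ∈ U) (hηU : ∀ p ∈ W, η p ∈ U)
    (hξd : ContDiffOn ℝ 1 ξ W) (hηd : ContDiffOn ℝ 1 η W)
    (hseg : ∀ p ∈ W, (1 - p.2) • ξ p + p.2 • η p = p.1)
    (hgradmatch : ∀ p ∈ W, grad φ₀ (ξ p) = grad φ₁ (η p))
    (u : (Fin n → ℝ) × ℝ → ℝ) (hu : ContDiffOn ℝ 2 u W)
    (hspace : ∀ p ∈ W, grad (fun y => u (y, p.2)) p.1 = grad φ₀ (ξ p))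
    (hdeg : ∀ p ∈ W, (fullHess u p).det = 0) :
    ∀ p ∈ W,
      fullHess u p (Sum.inr ()) (Sum.inr ()) =
        (ξ p - η p) ⬝ᵥ
          ((((1 - p.2) • (hess φ₀ (ξ p))⁻¹ + p.2 • (hess φ₁ (η p))⁻¹)⁻¹).mulVec
            (ξ p - η p)) := by
  intro p hp
  obtain ⟨ht₀, ht₁⟩ := hWt p hp
  have hpW : W ∈ 𝓝 p := hWo.mem_nhds hp
  have hup : ContDiffAt ℝ 2 u p := hu.contDiffAt hpW
  have hξp : DifferentiableAt ℝ ξ p := (hξd.contDiffAt hpW).differentiableAt one_ne_zero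
  have hηp : DifferentiableAt ℝ η p := (hηd.contDiffAt hpW).differentiableAt one_ne_zero
  have hφ₀p : ContDiffAt ℝ 2 φ₀ (ξ p) := hφ₀.contDiffAt (hUo.mem_nhds (hξU p hp))
  have hφ₁p : ContDiffAt ℝ 2 φ₁ (η p) := hφ₁.contDiffAt (hUo.mem_nhds (hηU p hp))
  have hA := hH₀ _ (hξU p hp)
  have hB := hH₁ _ (hηU p hp)
  have hC := (hA.inv.smul (sub_pos.2 ht₁)).add (hB.inv.smul ht₀)
  have hmatch (w) : hess φ₀ (ξ p) *ᵥ fderiv ℝ ξ p w = hess φ₁ (η p) *ᵥ fderiv ℝ η p w := by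
    rw [← fderiv_grad_comp hφ₀p hξp, ← fderiv_grad_comp hφ₁p hηp,
      EventuallyEq.fderiv_eq (eventually_of_mem hpW hgradmatch)]
  have hcol (a j) : fullHess u p a (.inl j) =
      (((1 - p.2) • (hess φ₀ (ξ p))⁻¹ + p.2 • (hess φ₁ (η p))⁻¹)⁻¹ *ᵥ
        ((dirvec n a).1 + (dirvec n a).2 • (ξ p - η p))) j := by
    rw [fullHess_apply_inl hup (eventually_of_mem hpW hspace)
      (hφ₀p.differentiableAt_grad.comp p hξp), fderiv_grad_comp hφ₀p hξp,
      mulVec_eq_inv_smul_add_smul_inv_mulVec hA.det_pos.ne'.isUnit hB.det_pos.ne'.isUnit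
        hC.det_pos.ne'.isUnit (hmatch _)
        (one_sub_smul_fderiv_add_smul_fderiv_eq hξp hηp (eventually_of_mem hpW hseg) _)]
  refine hup.isSymm_fullHess.apply_inr_inr_eq_of_det_eq_zero
    (isUnit_nonsing_inv_det _ hC.det_pos.ne'.isUnit) (fun i j => ?_) (fun j => ?_) (hdeg p hp)
  · rw [← hup.isSymm_fullHess.apply, hcol]
    simp [dirvec]
  · rw [hcol]
    simp [dirvec]

/-- Corollary 3.5 of the paper: if the full Hessian of `u` is degenerate
(`det D²_{(x,t)}u = 0`) and the spatial gradient of `u` is `∇φ₀(ξ(x,t))`, then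
`∂²ₜₜu = ⟨ξ - η, H (ξ - η)⟩` with `H = ((1-t)(D²φ₀(ξ))⁻¹ + t(D²φ₁(η))⁻¹)⁻¹`. -/
theorem stmt8 (n : ℕ) (U : Set (Fin n → ℝ)) (hUo : IsOpen U) (hUc : Convex ℝ U)
    (φ₀ φ₁ : (Fin n → ℝ) → ℝ)
    (hφ₀ : ContDiffOn ℝ 2 φ₀ U) (hφ₁ : ContDiffOn ℝ 2 φ₁ U)
    (hH₀ : ∀ x ∈ U, (hess φ₀ x).PosDef) (hH₁ : ∀ x ∈ U, (hess φ₁ x).PosDef)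
    (W : Set ((Fin n → ℝ) × ℝ)) (hWo : IsOpen W)
    (hWt : ∀ p ∈ W, p.2 ∈ Set.Ioo (0 : ℝ) 1)
    (ξ η : (Fin n → ℝ) × ℝ → Fin n → ℝ)
    (hξU : ∀ p ∈ W, ξ p ∈ U) (hηU : ∀ p ∈ W, η p ∈ U)
    (hξd : ContDiffOn ℝ 1 ξ W) (hηd : ContDiffOn ℝ 1 η W)
    (hseg : ∀ p ∈ W, (1 - p.2) • ξ p + p.2 • η p = p.1)
    (hgradmatch : ∀ p ∈ W, grad φ₀ (ξ p) = grad φ₁ (η p))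
    (u : (Fin n → ℝ) × ℝ → ℝ) (hu : ContDiffOn ℝ 2 u W)
    (hspace : ∀ p ∈ W, grad (fun y => u (y, p.2)) p.1 = grad φ₀ (ξ p))
    (hdeg : ∀ p ∈ W, (fullHess u p).det = 0) :
    ∀ p ∈ W,
      fullHess u p (Sum.inr ()) (Sum.inr ()) =
        (ξ p - η p) ⬝ᵥ
          ((((1 - p.2) • (hess φ₀ (ξ p))⁻¹ + p.2 • (hess φ₁ (η p))⁻¹)⁻¹).mulVec
            (ξ p - η p)) :=
  stmt8_general n U hUo φ₀ φ₁ hφ₀ hφ₁ hH₀ hH₁ W hWo hWt ξ η hξU hηU hξd hηd hseg hgradmatch u hu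
    hspace hdeg
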